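/- arXiv:1908.01083 — 2 statements merged into one kernel-verified Lean document; each statement's English description precedes it below -/
import Mathlib

section
/- Let A be a symmetric positive definite n×n real matrix and b ∈ ℝⁿ, with exact solution x* = A⁻¹ b. Define the steepest descent iteration x_{k+1} = x_k + ω_k r_k, where r_k = b − A x_k and ω_k = (r_kᵀ r_k)/(r_kᵀ A r_k) is chosen to minimize f(x) = (1/2) xᵀ A x − bᵀ x along the direction r_k (with the convention that the iteration stops, i.e. x_{k+1} = x_k, when r_k = 0). Then the iterates x_k converge to x*. -/
/-!
Let `e = x - x*` be the error, so that the residual is `r = -A e`. The exact line search lowers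
the energy `eᵀ A e` by `(rᵀ r)² / (rᵀ A r)`, while the energy itself equals `rᵀ A⁻¹ r`. By
compactness of the unit sphere, `(rᵀ A r)(rᵀ A⁻¹ r) ≤ K (rᵀ r)²` for some `K ≥ 1`, so every
step multiplies the energy by at most `1 - 1/K`. Hence the energy decays geometrically, and it
dominates `‖e‖²` up to a constant.
-/

open Matrix Filter Topology

theorem exists_le_mul_of_homogeneous {E : Type*} [NormedAddCommGroup E] [NormedSpace ℝ E]
    [FiniteDimensional ℝ E] {Q P : E → ℝ} {p : ℕ} (hp : p ≠ 0)
    (hQ : Continuous Q) (hP : Continuous P)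
    (hQ_smul : ∀ (c : ℝ) v, Q (c • v) = c ^ p * Q v)
    (hP_smul : ∀ (c : ℝ) v, P (c • v) = c ^ p * P v)
    (hP_pos : ∀ v, v ≠ 0 → 0 < P v) :
    ∃ M, ∀ v, Q v ≤ M * P v := by
  have hP_ne : ∀ u ∈ Metric.sphere (0 : E) 1, P u ≠ 0 := fun u hu =>
    (hP_pos u (ne_zero_of_mem_unit_sphere ⟨u, hu⟩)).ne'
  obtain ⟨M, hM⟩ := (isCompact_sphere (0 : E) 1).bddAbove_image
    (hQ.continuousOn.div hP.continuousOn hP_ne)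
  refine ⟨M, fun v => ?_⟩
  rcases eq_or_ne v 0 with rfl | hv
  · have hQ0 := hQ_smul 0 0
    have hP0 := hP_smul 0 0
    simp only [zero_smul, zero_pow hp, zero_mul] at hQ0 hP0
    simp [hQ0, hP0]
  set u := ‖v‖⁻¹ • v
  have hu : u ∈ Metric.sphere (0 : E) 1 := by
    simp [u, norm_smul, inv_mul_cancel₀ (norm_ne_zero_iff.mpr hv)]
  have hvu : v = ‖v‖ • u := by simp [u, smul_smul, mul_inv_cancel₀ (norm_ne_zero_iff.mpr hv)]
  have hQu : Q u ≤ M * P u := by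
    have := hM ⟨u, hu, rfl⟩
    rwa [Pi.div_apply, div_le_iff₀ (hP_pos u (ne_zero_of_mem_unit_sphere ⟨u, hu⟩))] at this
  rw [hvu, hQ_smul, hP_smul]
  calc ‖v‖ ^ p * Q u ≤ ‖v‖ ^ p * (M * P u) := by gcongr
    _ = M * (‖v‖ ^ p * P u) := by ring

theorem tendsto_zero_of_succ_le_mul {u : ℕ → ℝ} {c : ℝ} (hc₀ : 0 ≤ c) (hc₁ : c < 1)
    (hu : ∀ k, 0 ≤ u k) (h : ∀ k, u (k + 1) ≤ c * u k) : Tendsto u atTop (𝓝 0) :=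
  squeeze_zero hu (fun k => le_geom hc₀ k fun j _ => h j) <| by
    simpa using (tendsto_pow_atTop_nhds_zero_of_lt_one hc₀ hc₁).mul_const (u 0)

namespace Matrix

variable {ι : Type*} [Fintype ι]

theorem continuous_dotProduct_mulVec (A : Matrix ι ι ℝ) :
    Continuous fun v : ι → ℝ => v ⬝ᵥ A *ᵥ v :=
  continuous_id.dotProduct (continuous_const.matrix_mulVec continuous_id)

theorem smul_dotProduct_mulVec_smul (A : Matrix ι ι ℝ) (c : ℝ) (v : ι → ℝ) :
    c • v ⬝ᵥ A *ᵥ (c • v) = c ^ 2 * (v ⬝ᵥ A *ᵥ v) := by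
  rw [mulVec_smul, smul_dotProduct, dotProduct_smul, smul_eq_mul, smul_eq_mul, sq, mul_assoc]

theorem smul_dotProduct_smul (c : ℝ) (v : ι → ℝ) : c • v ⬝ᵥ c • v = c ^ 2 * (v ⬝ᵥ v) := by
  rw [smul_dotProduct, dotProduct_smul, smul_eq_mul, smul_eq_mul, sq, mul_assoc]

theorem dotProduct_self_pos {v : ι → ℝ} (hv : v ≠ 0) : 0 < v ⬝ᵥ v := by
  simpa using dotProduct_star_self_pos_iff.mpr hv

theorem exists_dotProduct_mulVec_mul_dotProduct_mulVec_le (A B : Matrix ι ι ℝ) :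
    ∃ K, 1 ≤ K ∧ ∀ v, (v ⬝ᵥ A *ᵥ v) * (v ⬝ᵥ B *ᵥ v) ≤ K * (v ⬝ᵥ v) ^ 2 := by
  obtain ⟨K, hK⟩ := exists_le_mul_of_homogeneous (p := 4)
    (Q := fun v => (v ⬝ᵥ A *ᵥ v) * (v ⬝ᵥ B *ᵥ v)) (P := fun v => (v ⬝ᵥ v) ^ 2) (by norm_num)
    ((continuous_dotProduct_mulVec A).mul (continuous_dotProduct_mulVec B))
    ((continuous_id.dotProduct continuous_id).pow 2)
    (fun c v => by simp only [smul_dotProduct_mulVec_smul]; ring)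
    (fun c v => by simp only [smul_dotProduct_smul]; ring)
    (fun v hv => by have := dotProduct_self_pos hv; positivity)
  refine ⟨max K 1, le_max_right _ _, fun v => (hK v).trans ?_⟩
  gcongr
  exact le_max_left _ _

variable {A : Matrix ι ι ℝ}

theorem PosDef.exists_norm_sq_le (hA : A.PosDef) : ∃ M, ∀ v, ‖v‖ ^ 2 ≤ M * (v ⬝ᵥ A *ᵥ v) :=
  exists_le_mul_of_homogeneous two_ne_zero (continuous_norm.pow 2)
    (continuous_dotProduct_mulVec A)
    (fun c v => by rw [norm_smul, mul_pow, Real.norm_eq_abs, sq_abs])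
    (smul_dotProduct_mulVec_smul A) (fun v hv => by simpa using hA.dotProduct_mulVec_pos hv)

theorem IsSymm.dotProduct_mulVec_comm (hA : A.IsSymm) (v w : ι → ℝ) :
    v ⬝ᵥ A *ᵥ w = w ⬝ᵥ A *ᵥ v := by
  simpa only [hA.eq] using dotProduct_transpose_mulVec A v w

theorem IsSymm.dotProduct_mulVec_add_lineSearch (hA : A.IsSymm) {e r : ι → ℝ}
    (hr : A *ᵥ e = -r) :
    (e + ((r ⬝ᵥ r) / (r ⬝ᵥ A *ᵥ r)) • r) ⬝ᵥ A *ᵥ (e + ((r ⬝ᵥ r) / (r ⬝ᵥ A *ᵥ r)) • r) =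
      e ⬝ᵥ A *ᵥ e - (r ⬝ᵥ r) ^ 2 / (r ⬝ᵥ A *ᵥ r) := by
  have her : e ⬝ᵥ A *ᵥ r = -(r ⬝ᵥ r) := by
    rw [hA.dotProduct_mulVec_comm, hr, dotProduct_neg]
  have hre : r ⬝ᵥ A *ᵥ e = -(r ⬝ᵥ r) := by rw [hr, dotProduct_neg]
  simp only [mulVec_add, mulVec_smul, dotProduct_add, add_dotProduct, dotProduct_smul,
    smul_dotProduct, smul_eq_mul, her, hre]
  rcases eq_or_ne (r ⬝ᵥ A *ᵥ r) 0 with h | h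
  -- the step size is then `x / 0 = 0`, and both sides reduce to `e ⬝ᵥ A *ᵥ e`
  · simp [h]
  · field_simp
    ring

variable [DecidableEq ι]

theorem dotProduct_mulVec_eq_dotProduct_inv_mulVec (hA : IsUnit A) {e r : ι → ℝ}
    (hr : A *ᵥ e = -r) : e ⬝ᵥ A *ᵥ e = r ⬝ᵥ A⁻¹ *ᵥ r := by
  have he : A⁻¹ *ᵥ r = -e := by
    rw [← neg_neg r, ← hr, mulVec_neg, mulVec_mulVec,
      nonsing_inv_mul _ ((isUnit_iff_isUnit_det A).mp hA), one_mulVec]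
  rw [hr, he, dotProduct_neg, dotProduct_neg, dotProduct_comm]

theorem PosDef.dotProduct_mulVec_add_lineSearch_le (hA : A.PosDef) {K : ℝ} (hK : 0 < K)
    (hKA : ∀ v, (v ⬝ᵥ A *ᵥ v) * (v ⬝ᵥ A⁻¹ *ᵥ v) ≤ K * (v ⬝ᵥ v) ^ 2)
    {e r : ι → ℝ} (hr : A *ᵥ e = -r) :
    (e + ((r ⬝ᵥ r) / (r ⬝ᵥ A *ᵥ r)) • r) ⬝ᵥ A *ᵥ (e + ((r ⬝ᵥ r) / (r ⬝ᵥ A *ᵥ r)) • r) ≤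
      (1 - K⁻¹) * (e ⬝ᵥ A *ᵥ e) := by
  rw [(isHermitian_iff_isSymm.mp hA.isHermitian).dotProduct_mulVec_add_lineSearch hr,
    dotProduct_mulVec_eq_dotProduct_inv_mulVec hA.isUnit hr, sub_le_iff_le_add, sub_mul, one_mul,
    sub_add_eq_add_sub, le_sub_iff_add_le, add_le_add_iff_left]
  rcases eq_or_ne r 0 with rfl | hr0
  · simp
  have hrAr : 0 < r ⬝ᵥ A *ᵥ r := by simpa using hA.dotProduct_mulVec_pos hr0
  rw [le_div_iff₀ hrAr, mul_assoc, inv_mul_le_iff₀ hK]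
  linarith [hKA r]

end Matrix

/-- Convergence of steepest descent for a symmetric positive definite matrix:
the iteration `x_{k+1} = x_k + ω_k r_k` with exact line search
`ω_k = (r_kᵀ r_k)/(r_kᵀ A r_k)` (and `x_{k+1} = x_k` when `r_k = 0`,
which is automatic here since division by zero yields `0` in Lean)
converges to the exact solution `x* = A⁻¹ b`. -/
theorem steepest_descent_converges
    (n : ℕ) (A : Matrix (Fin n) (Fin n) ℝ) (hA : A.PosDef)
    (b : Fin n → ℝ) (x : ℕ → Fin n → ℝ)
    (r : ℕ → Fin n → ℝ) (hr : ∀ k, r k = b - A.mulVec (x k))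
    (hx : ∀ k, x (k + 1) =
      x k + ((r k ⬝ᵥ r k) / (r k ⬝ᵥ A.mulVec (r k))) • r k) :
    Filter.Tendsto x Filter.atTop (nhds (A⁻¹.mulVec b)) := by
  set xs := A⁻¹ *ᵥ b
  have h_residual : ∀ k, A *ᵥ (x k - xs) = -r k := fun k => by
    rw [hr, mulVec_sub, mulVec_mulVec, mul_nonsing_inv _ ((isUnit_iff_isUnit_det A).mp hA.isUnit),
      one_mulVec, neg_sub]
  have h_error : ∀ k, x (k + 1) - xs = x k - xs + ((r k ⬝ᵥ r k) / (r k ⬝ᵥ A *ᵥ r k)) • r k :=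
    fun k => by rw [hx]; abel
  obtain ⟨K, hK, hKA⟩ := exists_dotProduct_mulVec_mul_dotProduct_mulVec_le A A⁻¹
  have h_energy : Tendsto (fun k => (x k - xs) ⬝ᵥ A *ᵥ (x k - xs)) atTop (𝓝 0) :=
    tendsto_zero_of_succ_le_mul (sub_nonneg.mpr (inv_le_one_of_one_le₀ hK))
      (sub_lt_self 1 (inv_pos.mpr (zero_lt_one.trans_le hK)))
      (fun k => by simpa using hA.posSemidef.dotProduct_mulVec_nonneg (x k - xs))
      (fun k => h_error k ▸ hA.dotProduct_mulVec_add_lineSearch_le (zero_lt_one.trans_le hK) hKA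
        (h_residual k))
  obtain ⟨M, hM⟩ := hA.exists_norm_sq_le
  have h_norm_sq : Tendsto (fun k => ‖x k - xs‖ ^ 2) atTop (𝓝 0) :=
    squeeze_zero (fun k => sq_nonneg _) (fun k => hM _) (by simpa using h_energy.const_mul M)
  rw [tendsto_iff_norm_sub_tendsto_zero]
  simpa [Real.sqrt_sq (norm_nonneg _)] using h_norm_sq.sqrt
end

section
/- Let A be an invertible n×n real matrix with rows aᵢ all nonzero, let b ∈ ℝⁿ, and let x* = A⁻¹ b. Define the cyclic Kaczmarz iteration: starting from any x⁽⁰⁾ ∈ ℝⁿ, at step j update the coordinate index i = (j mod n) + 1 by x⁽ʲ⁺¹⁾ = x⁽ʲ⁾ + (rᵢ⁽ʲ⁾/‖aᵢ‖₂²) aᵢ, where r⁽ʲ⁾ = b − A x⁽ʲ⁾. Then the sequence x⁽ʲ⁾ converges to x*. -/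
open Matrix Filter

/-- The `i`-th row of `A`, viewed as a vector of Euclidean space `ℝⁿ`. -/
noncomputable def matrixRow (n : ℕ) (A : Matrix (Fin n) (Fin n) ℝ) (i : Fin n) :
    EuclideanSpace ℝ (Fin n) :=
  (WithLp.equiv 2 (Fin n → ℝ)).symm (fun j => A i j)

/-- The row index relaxed at step `j` of the cyclic sweep: `j mod n` (0-based). -/
def cyclicIndex (n : ℕ) (hn : 0 < n) (j : ℕ) : Fin n :=
  ⟨j % n, Nat.mod_lt j hn⟩

/-!
A Kaczmarz step replaces the error `x - x*` by its orthogonal projection onto the hyperplane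
orthogonal to the relaxed row, so by Pythagoras the squared error drops by the squared length of
the step: the steps are square-summable and tend to zero. By compactness the errors at the starts
of infinitely many sweeps converge to some `y`; since the steps vanish, the errors at every later
position of those sweeps converge to `y` as well, so `y` lies in every hyperplane and is `0` as `A`
is invertible. The error norms decrease, so the whole error sequence tends to `0`.
-/

open Topology

theorem tendsto_sub_succ_zero_of_norm_sq_eq {E : Type*} [SeminormedAddCommGroup E] {e : ℕ → E}
    (h : ∀ j, ‖e j‖ ^ 2 = ‖e (j + 1)‖ ^ 2 + ‖e j - e (j + 1)‖ ^ 2) :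
    Tendsto (fun j => e j - e (j + 1)) atTop (𝓝 0) := by
  have hsum : Summable fun j => ‖e j - e (j + 1)‖ ^ 2 := by
    refine summable_of_sum_range_le (c := ‖e 0‖ ^ 2) (fun _ => by positivity) fun N => ?_
    have htel : ∑ j ∈ Finset.range N, ‖e j - e (j + 1)‖ ^ 2 = ‖e 0‖ ^ 2 - ‖e N‖ ^ 2 := by
      rw [← Finset.sum_range_sub' (fun j => ‖e j‖ ^ 2)]
      exact Finset.sum_congr rfl fun j _ => by rw [h j]; ring
    rw [htel]
    linarith [sq_nonneg ‖e N‖]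
  rw [tendsto_zero_iff_norm_tendsto_zero]
  simpa [Real.sqrt_sq (norm_nonneg _)] using hsum.tendsto_atTop_zero.sqrt

theorem tendsto_comp_add_of_tendsto_sub_succ {G : Type*} [AddCommGroup G] [TopologicalSpace G]
    [IsTopologicalAddGroup G] {e : ℕ → G} (hd : Tendsto (fun j => e j - e (j + 1)) atTop (𝓝 0))
    {ψ : ℕ → ℕ} (hψ : Tendsto ψ atTop atTop) {y : G} (hy : Tendsto (e ∘ ψ) atTop (𝓝 y)) (i : ℕ) :
    Tendsto (fun k => e (ψ k + i)) atTop (𝓝 y) := by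
  induction i with
  | zero => exact hy
  | succ i ih =>
    have hstep := ih.sub (hd.comp ((tendsto_add_atTop_nat i).comp hψ))
    rw [sub_zero] at hstep
    exact hstep.congr fun k => sub_sub_cancel _ _

section CyclicProjections

variable {𝕜 E : Type*} [RCLike 𝕜] [NormedAddCommGroup E] [InnerProductSpace 𝕜 E]

theorem tendsto_zero_of_cyclic_starProjection [FiniteDimensional 𝕜 E] {n : ℕ} (hn : 0 < n)
    (K : Fin n → Submodule 𝕜 E) (hK : ⨅ i, K i = ⊥) {e : ℕ → E}
    (he : ∀ j, e (j + 1) = (K (cyclicIndex n hn j)).starProjection (e j)) :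
    Tendsto e atTop (𝓝 0) := by
  have := FiniteDimensional.proper_rclike 𝕜 E
  have hpyth (j : ℕ) : ‖e j‖ ^ 2 = ‖e (j + 1)‖ ^ 2 + ‖e j - e (j + 1)‖ ^ 2 := by
    rw [he]
    simpa using (K _).norm_sq_eq_add_norm_sq_starProjection (e j)
  have hanti : Antitone (‖e ·‖) := antitone_nat_of_succ_le fun j =>
    (pow_le_pow_iff_left₀ (norm_nonneg _) (norm_nonneg _) two_ne_zero).mp <| by
      linarith [hpyth j, sq_nonneg ‖e j - e (j + 1)‖]
  obtain ⟨y, -, φ, hφ, hy⟩ := tendsto_subseq_of_bounded (x := fun k => e (n * k))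
    (Metric.isBounded_closedBall (x := 0) (r := ‖e 0‖))
    fun k => mem_closedBall_zero_iff.mpr (hanti (Nat.zero_le _))
  have hψ : Tendsto (fun k => n * φ k) atTop atTop :=
    (tendsto_id.const_mul_atTop' hn).comp hφ.tendsto_atTop
  have hyK (i : Fin n) : y ∈ K i := by
    have hlim := tendsto_comp_add_of_tendsto_sub_succ (tendsto_sub_succ_zero_of_norm_sq_eq hpyth)
      hψ hy (i + 1)
    refine (K i).closed_of_finiteDimensional.mem_of_tendsto hlim (Eventually.of_forall fun k => ?_)
    have hidx : cyclicIndex n hn (n * φ k + i) = i := Fin.ext <| by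
      simp [cyclicIndex, Nat.mod_eq_of_lt i.isLt]
    rw [← add_assoc, he, hidx]
    exact (K i).starProjection_apply_mem _
  have hy0 : y = 0 := by
    rw [← Submodule.mem_bot 𝕜, ← hK, Submodule.mem_iInf]
    exact hyK
  rw [tendsto_zero_iff_norm_tendsto_zero, tendsto_iff_tendsto_subseq_of_antitone hanti hψ]
  simpa [hy0, Function.comp_def] using hy.norm

theorem starProjection_orthogonal_singleton (a v : E) :
    (𝕜 ∙ a)ᗮ.starProjection v = v - (inner 𝕜 a v / ((‖a‖ ^ 2 : ℝ) : 𝕜)) • a := by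
  rw [Submodule.starProjection_orthogonal_val, Submodule.starProjection_singleton]

end CyclicProjections

theorem inner_matrixRow {n : ℕ} (A : Matrix (Fin n) (Fin n) ℝ) (i : Fin n)
    (v : EuclideanSpace ℝ (Fin n)) : inner ℝ (matrixRow n A i) v = A.mulVec v i := by
  simp [matrixRow, PiLp.inner_apply, Matrix.mulVec, dotProduct, mul_comm]

theorem iInf_orthogonal_matrixRow_eq_bot {n : ℕ} {A : Matrix (Fin n) (Fin n) ℝ}
    (hA : IsUnit A.det) : ⨅ i, (ℝ ∙ matrixRow n A i)ᗮ = ⊥ := by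
  refine (Submodule.eq_bot_iff _).mpr fun y hy => WithLp.ofLp_injective 2 ?_
  refine Matrix.mulVec_injective_iff_isUnit.mpr ((A.isUnit_iff_isUnit_det).mpr hA) ?_
  ext i
  rw [← inner_matrixRow]
  simpa [Submodule.mem_orthogonal_singleton_iff_inner_right] using (Submodule.mem_iInf _).mp hy i

theorem cyclic_kaczmarz_converges_general
    (n : ℕ) (hn : 0 < n) (A : Matrix (Fin n) (Fin n) ℝ)
    (hdet : IsUnit A.det)
    (b : EuclideanSpace ℝ (Fin n))
    (x : ℕ → EuclideanSpace ℝ (Fin n))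
    (hx : ∀ j : ℕ,
      x (j + 1) = x j +
        ((b (cyclicIndex n hn j) - A.mulVec (x j) (cyclicIndex n hn j))
            / ‖matrixRow n A (cyclicIndex n hn j)‖ ^ 2)
          • matrixRow n A (cyclicIndex n hn j)) :
    Filter.Tendsto x Filter.atTop
      (nhds ((WithLp.equiv 2 (Fin n → ℝ)).symm (A⁻¹.mulVec b))) := by
  set xs : EuclideanSpace ℝ (Fin n) := (WithLp.equiv 2 (Fin n → ℝ)).symm (A⁻¹.mulVec b)
  have hxs : A.mulVec xs = b := by
    simp [xs, Matrix.mulVec_mulVec, Matrix.mul_nonsing_inv A hdet]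
  have herr (j : ℕ) : x (j + 1) - xs =
      (ℝ ∙ matrixRow n A (cyclicIndex n hn j))ᗮ.starProjection (x j - xs) := by
    rw [starProjection_orthogonal_singleton, inner_sub_right, inner_matrixRow, inner_matrixRow,
      hxs, hx j]
    simp only [RCLike.ofReal_real_eq_id, id_eq]
    module
  exact tendsto_sub_nhds_zero_iff.mp
    (tendsto_zero_of_cyclic_starProjection hn _ (iInf_orthogonal_matrixRow_eq_bot hdet) herr)

/-- Convergence of the cyclic Kaczmarz iteration: for an invertible matrix `A`
with nonzero rows, the iterates obtained by successively projecting onto the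
hyperplanes of the system (cycling through the rows) converge to `x* = A⁻¹ b`. -/
theorem cyclic_kaczmarz_converges
    (n : ℕ) (hn : 0 < n) (A : Matrix (Fin n) (Fin n) ℝ)
    (hdet : IsUnit A.det) (hrows : ∀ i, matrixRow n A i ≠ 0)
    (b : EuclideanSpace ℝ (Fin n))
    (x : ℕ → EuclideanSpace ℝ (Fin n))
    (hx : ∀ j : ℕ,
      x (j + 1) = x j +
        ((b (cyclicIndex n hn j) - A.mulVec (x j) (cyclicIndex n hn j))
            / ‖matrixRow n A (cyclicIndex n hn j)‖ ^ 2)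
          • matrixRow n A (cyclicIndex n hn j)) :
    Filter.Tendsto x Filter.atTop
      (nhds ((WithLp.equiv 2 (Fin n → ℝ)).symm (A⁻¹.mulVec b))) :=
  cyclic_kaczmarz_converges_general n hn A hdet b x hx
end
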